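/- arXiv:2501.18143 — 4 statements merged into one kernel-verified Lean document; each statement's English description precedes it below -/
import Mathlib

section
/- Let c be a positive integer, p ∈ ℝ^c, and suppose η ∈ ℝ satisfies Σ_{j=1}^c max(p_j + η, 0) = 1. Define x* ∈ ℝ^c by x*_j = max(p_j + η, 0). Then x* lies in the probability simplex Δ = {x ∈ ℝ^c : x ≥ 0 entrywise, Σ_j x_j = 1}, and for every x ∈ Δ one has ‖x* − p‖₂ ≤ ‖x − p‖₂; i.e., x* is the Euclidean projection of p onto Δ. -/
/-!
The point `s = max (p + η) 0` satisfies the variational inequality `⟪x - s, s - p⟫ ≥ 0` for every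
`x` in the simplex: coordinatewise, `s_j` is the projection of `p_j + η` onto `[0, ∞)`, so
`(x_j - s_j) (s_j - p_j - η) ≥ 0`, and summing kills the `η` term because `∑ x_j = ∑ s_j`.
Expanding `‖x - p‖² = ‖x - s‖² + 2 ⟪x - s, s - p⟫ + ‖s - p‖²` then gives the claim.
-/

open Finset

lemma mul_sub_max_zero_nonneg {x : ℝ} (hx : 0 ≤ x) (y : ℝ) :
    0 ≤ (x - max y 0) * (max y 0 - y) := by
  rcases le_total 0 y with hy | hy
  · simp [max_eq_left hy]
  · rw [max_eq_right hy]
    nlinarith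

section

variable {ι : Type*} [Fintype ι]

lemma sum_sq_sub_le_of_sum_mul_nonneg {x s p : ι → ℝ}
    (h : 0 ≤ ∑ j, (x j - s j) * (s j - p j)) :
    ∑ j, (s j - p j) ^ 2 ≤ ∑ j, (x j - p j) ^ 2 := by
  have expand : ∑ j, (x j - p j) ^ 2 =
      ∑ j, (x j - s j) ^ 2 + 2 * ∑ j, (x j - s j) * (s j - p j) + ∑ j, (s j - p j) ^ 2 := by
    rw [mul_sum, ← sum_add_distrib, ← sum_add_distrib]
    exact sum_congr rfl fun j _ => by ring
  have : 0 ≤ ∑ j, (x j - s j) ^ 2 := sum_nonneg fun j _ => sq_nonneg _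
  linarith

lemma sum_sq_max_shift_sub_le {p x : ι → ℝ} (η : ℝ) (hx : ∀ j, 0 ≤ x j)
    (hsum : ∑ j, x j = ∑ j, max (p j + η) 0) :
    ∑ j, (max (p j + η) 0 - p j) ^ 2 ≤ ∑ j, (x j - p j) ^ 2 := by
  set s : ι → ℝ := fun j => max (p j + η) 0
  apply sum_sq_sub_le_of_sum_mul_nonneg
  calc (0 : ℝ) = η * ∑ j, (x j - s j) := by rw [sum_sub_distrib, hsum, sub_self, mul_zero]
    _ ≤ ∑ j, (x j - s j) * (s j - p j) := by
      rw [mul_sum]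
      refine sum_le_sum fun j _ => ?_
      have := mul_sub_max_zero_nonneg (hx j) (p j + η)
      linarith

end

theorem simplex_projection_general {c : ℕ} (p : Fin c → ℝ) (η : ℝ)
    (hη : ∑ j, max (p j + η) 0 = 1) :
    (∀ j, 0 ≤ max (p j + η) 0) ∧ (∑ j, max (p j + η) 0 = 1) ∧
      ∀ x : Fin c → ℝ, (∀ j, 0 ≤ x j) → (∑ j, x j = 1) →
        Real.sqrt (∑ j, (max (p j + η) 0 - p j) ^ 2) ≤
          Real.sqrt (∑ j, (x j - p j) ^ 2) :=
  ⟨fun _ => le_max_right _ _, hη, fun _ hx hsum =>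
    Real.sqrt_le_sqrt (sum_sq_max_shift_sub_le η hx (hsum.trans hη.symm))⟩

/-- The thresholded shift `x*_j = max (p_j + η) 0`, where `η` makes the entries sum to `1`,
is the Euclidean projection of `p` onto the probability simplex. -/
theorem simplex_projection {c : ℕ} (hc : 0 < c) (p : Fin c → ℝ) (η : ℝ)
    (hη : ∑ j, max (p j + η) 0 = 1) :
    (∀ j, 0 ≤ max (p j + η) 0) ∧ (∑ j, max (p j + η) 0 = 1) ∧
      ∀ x : Fin c → ℝ, (∀ j, 0 ≤ x j) → (∑ j, x j = 1) →
        Real.sqrt (∑ j, (max (p j + η) 0 - p j) ^ 2) ≤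
          Real.sqrt (∑ j, (x j - p j) ^ 2) :=
  simplex_projection_general p η hη
end

section
/- (Frank–Wolfe convergence, O(1/t), simple step size.) Let E be a real inner product space, n > 0 a real number, and Ω ⊆ E a nonempty convex set with ‖x − y‖² ≤ 2n for all x, y ∈ Ω. Let f : E → ℝ be convex and differentiable with L-Lipschitz gradient (L > 0), and let F* ∈ Ω satisfy f(F*) ≤ f(P) for all P ∈ Ω. Let F⁰ ∈ Ω satisfy f(F⁰) − f(F*) ≤ (14/3)·n·L, and define iterates F^{t+1} = (1 − μ_t)F^t + μ_t P^t, where μ_t = 2/(t+2) and P^t ∈ Ω satisfies ⟨∇f(F^t), P^t⟩ ≤ ⟨∇f(F^t), P⟩ for all P ∈ Ω. Then for every t ≥ 1, f(F^t) − f(F*) ≤ 4nL/(t+1). -/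
/-!
Two first-order facts drive the argument: convexity gives `⟪∇f x, y - x⟫ ≤ f y - f x`, and an
`L`-Lipschitz gradient gives the descent lemma `f y ≤ f x + ⟪∇f x, y - x⟫ + L/2 ‖y - x‖²`.
Since `P^t` minimises the linearisation over `Ω ∋ F*`, together they bound the gap
`h_t = f(F^t) - f(F*)` by `h_{t+1} ≤ (1 - μ_t) h_t + μ_t² n L`. As `μ_0 = 1`, this gives
`h_1 ≤ n L`, and the recursion then propagates `h_t ≤ 4nL/(t+1)`.
-/

open scoped RealInnerProductSpace
open AffineMap (lineMap lineMap_apply_zero lineMap_apply_one)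

section

variable {E : Type*} [NormedAddCommGroup E] [InnerProductSpace ℝ E] [CompleteSpace E]
  {f : E → ℝ} {f' : E → E}

theorem HasGradientAt.hasDerivAt_comp_lineMap {g x y : E} {s : ℝ}
    (hf : HasGradientAt f g (lineMap x y s)) :
    HasDerivAt (f ∘ lineMap x y) ⟪g, y - x⟫ s := by
  simpa [InnerProductSpace.toDual_apply_apply] using
    hf.hasFDerivAt.comp_hasDerivAt s AffineMap.hasDerivAt_lineMap

theorem ConvexOn.inner_gradient_sub_le {s : Set E} (hconv : ConvexOn ℝ s f) {g x y : E}
    (hx : x ∈ s) (hy : y ∈ s) (hf : HasGradientAt f g x) :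
    ⟪g, y - x⟫ ≤ f y - f x := by
  have hline : ConvexOn ℝ (lineMap x y ⁻¹' s) (f ∘ lineMap x y) :=
    hconv.comp_affineMap (lineMap x y)
  have hderiv : HasDerivAt (f ∘ lineMap x y) ⟪g, y - x⟫ (0 : ℝ) :=
    HasGradientAt.hasDerivAt_comp_lineMap (by rwa [lineMap_apply_zero])
  simpa [slope_def_field] using
    hline.le_slope_of_hasDerivAt (by simpa using hx) (by simpa using hy) one_pos hderiv

theorem le_add_inner_add_of_lipschitz_gradient (hf : ∀ x, HasGradientAt f (f' x) x)
    {L : ℝ} (hLip : ∀ x y, ‖f' x - f' y‖ ≤ L * ‖x - y‖) (x y : E) :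
    f y ≤ f x + ⟪f' x, y - x⟫ + L / 2 * ‖y - x‖ ^ 2 := by
  -- `f` along the segment minus its quadratic model; the Lipschitz bound makes it antitone.
  set φ : ℝ → ℝ := fun s => f (lineMap x y s) - s * ⟪f' x, y - x⟫ - L / 2 * s ^ 2 * ‖y - x‖ ^ 2
  set φ' : ℝ → ℝ := fun s =>
    ⟪f' (lineMap x y s), y - x⟫ - ⟪f' x, y - x⟫ - L * s * ‖y - x‖ ^ 2
  have hφ : ∀ s, HasDerivAt φ (φ' s) s := fun s => by
    have hlin : HasDerivAt (fun s : ℝ => s * ⟪f' x, y - x⟫) ⟪f' x, y - x⟫ s := by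
      simpa using (hasDerivAt_id s).mul_const ⟪f' x, y - x⟫
    have hquad : HasDerivAt (fun s : ℝ => L / 2 * s ^ 2 * ‖y - x‖ ^ 2) (L * s * ‖y - x‖ ^ 2) s := by
      refine (((hasDerivAt_pow 2 s).const_mul (L / 2)).mul_const (‖y - x‖ ^ 2)).congr_deriv ?_
      norm_num only; ring
    exact (((hf _).hasDerivAt_comp_lineMap).sub hlin).sub hquad
  have hφ'_nonpos : ∀ s ∈ interior (Set.Icc (0 : ℝ) 1), φ' s ≤ 0 := fun s hs => by
    rw [interior_Icc] at hs
    have hdist : ‖lineMap x y s - x‖ = s * ‖y - x‖ := by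
      rw [← dist_eq_norm, dist_lineMap_left, Real.norm_of_nonneg hs.1.le, dist_comm,
        dist_eq_norm]
    calc φ' s = ⟪f' (lineMap x y s) - f' x, y - x⟫ - L * s * ‖y - x‖ ^ 2 := by
          simp only [φ', inner_sub_left]
      _ ≤ ‖f' (lineMap x y s) - f' x‖ * ‖y - x‖ - L * s * ‖y - x‖ ^ 2 := by
          gcongr; exact real_inner_le_norm _ _
      _ ≤ L * ‖lineMap x y s - x‖ * ‖y - x‖ - L * s * ‖y - x‖ ^ 2 := by
          gcongr; exact hLip _ _
      _ = 0 := by rw [hdist]; ring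
  have hanti : AntitoneOn φ (Set.Icc 0 1) :=
    antitoneOn_of_hasDerivWithinAt_nonpos (convex_Icc 0 1)
      (fun s _ => (hφ s).continuousAt.continuousWithinAt)
      (fun s _ => (hφ s).hasDerivWithinAt) hφ'_nonpos
  have := hanti (by simp) (by simp) zero_le_one
  simp only [φ, lineMap_apply_zero, lineMap_apply_one] at this
  linarith

theorem frankWolfe_step_sub_le {s : Set E} (hconv : ConvexOn ℝ s f)
    (hf : ∀ x, HasGradientAt f (f' x) x) {L : ℝ}
    (hLip : ∀ x y, ‖f' x - f' y‖ ≤ L * ‖x - y‖) {x p xstar : E} (hx : x ∈ s) (hxstar : xstar ∈ s)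
    (hp : ⟪f' x, p⟫ ≤ ⟪f' x, xstar⟫) {μ : ℝ} (hμ : 0 ≤ μ) :
    f (lineMap x p μ) - f xstar ≤ (1 - μ) * (f x - f xstar) + μ ^ 2 * (L / 2 * ‖p - x‖ ^ 2) := by
  have hstep : lineMap x p μ - x = μ • (p - x) := by
    rw [AffineMap.lineMap_apply_module']; abel
  have hdescent := le_add_inner_add_of_lipschitz_gradient hf hLip x (lineMap x p μ)
  rw [hstep, real_inner_smul_right, norm_smul, mul_pow, Real.norm_eq_abs, sq_abs] at hdescent
  have hdir : ⟪f' x, p - x⟫ ≤ f xstar - f x :=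
    calc ⟪f' x, p - x⟫ ≤ ⟪f' x, xstar - x⟫ := by
          simpa only [inner_sub_right] using sub_le_sub_right hp _
      _ ≤ f xstar - f x := hconv.inner_gradient_sub_le hx hxstar (hf x)
  nlinarith [mul_le_mul_of_nonneg_left hdir hμ]

end

theorem le_four_mul_div_of_le_one_sub_two_div {h : ℕ → ℝ} {C : ℝ} (hC : 0 ≤ C)
    (hrec : ∀ t : ℕ, h (t + 1) ≤ (1 - 2 / ((t : ℝ) + 2)) * h t + (2 / ((t : ℝ) + 2)) ^ 2 * C) :
    ∀ t : ℕ, 1 ≤ t → h t ≤ 4 * C / ((t : ℝ) + 1) := by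
  refine Nat.le_induction ?_ fun t _ ih => ?_
  · have := hrec 0
    norm_num at this ⊢
    linarith
  · have hcoef : 1 - 2 / ((t : ℝ) + 2) = t / (t + 2) := by field_simp; ring
    have hdiff : 4 * C / ((t : ℝ) + 2) - (t / (t + 2) * (4 * C / (t + 1)) + (2 / (t + 2)) ^ 2 * C)
        = 4 * C / ((t + 1) * (t + 2) ^ 2) := by
      field_simp; ring
    calc h (t + 1) ≤ t / (t + 2) * h t + (2 / ((t : ℝ) + 2)) ^ 2 * C := hcoef ▸ hrec t
      _ ≤ t / (t + 2) * (4 * C / (t + 1)) + (2 / ((t : ℝ) + 2)) ^ 2 * C := by gcongr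
      _ ≤ 4 * C / ((t : ℝ) + 2) := by
          have : 0 ≤ 4 * C / (((t : ℝ) + 1) * (t + 2) ^ 2) := by positivity
          linarith
      _ = 4 * C / (((t + 1 : ℕ) : ℝ) + 1) := by push_cast; ring

theorem frank_wolfe_rate_simple_step_general {E : Type*} [NormedAddCommGroup E]
    [InnerProductSpace ℝ E] [CompleteSpace E]
    (n : ℝ) (hn : 0 < n) (Ω : Set E) (hΩ : Convex ℝ Ω)
    (hdiam : ∀ x ∈ Ω, ∀ y ∈ Ω, ‖x - y‖ ^ 2 ≤ 2 * n)
    (f : E → ℝ) (f' : E → E)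
    (hconv : ConvexOn ℝ Set.univ f) (hf : ∀ x, HasGradientAt f (f' x) x)
    (L : ℝ) (hL : 0 < L) (hLip : ∀ x y, ‖f' x - f' y‖ ≤ L * ‖x - y‖)
    (Fstar : E) (hFstar : Fstar ∈ Ω)
    (F P : ℕ → E) (hF0 : F 0 ∈ Ω)
    (hP : ∀ t, P t ∈ Ω)
    (hPmin : ∀ t, ∀ Q ∈ Ω, ⟪f' (F t), P t⟫ ≤ ⟪f' (F t), Q⟫)
    (hupd : ∀ t : ℕ, F (t + 1) =
      (1 - 2 / ((t : ℝ) + 2)) • F t + (2 / ((t : ℝ) + 2)) • P t) :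
    ∀ t : ℕ, 1 ≤ t → f (F t) - f Fstar ≤ 4 * n * L / ((t : ℝ) + 1) := by
  have hupd' : ∀ t : ℕ, F (t + 1) = lineMap (F t) (P t) (2 / ((t : ℝ) + 2)) := fun t => by
    rw [hupd, AffineMap.lineMap_apply_module]
  have hstep_mem : ∀ t : ℕ, 2 / ((t : ℝ) + 2) ∈ Set.Icc 0 1 := fun t =>
    ⟨by positivity, (div_le_one (by positivity)).2 (by linarith [t.cast_nonneg (α := ℝ)])⟩
  have hmem : ∀ t, F t ∈ Ω := fun t => by
    induction t with
    | zero => exact hF0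
    | succ t ih => rw [hupd']; exact hΩ.lineMap_mem ih (hP t) (hstep_mem t)
  have hgap : ∀ t : ℕ, f (F (t + 1)) - f Fstar ≤
      (1 - 2 / ((t : ℝ) + 2)) * (f (F t) - f Fstar) + (2 / ((t : ℝ) + 2)) ^ 2 * (n * L) := by
    intro t
    rw [hupd']
    refine (frankWolfe_step_sub_le hconv hf hLip (Set.mem_univ _) (Set.mem_univ _)
      (hPmin t Fstar hFstar) (hstep_mem t).1).trans ?_
    gcongr _ + _ * ?_
    calc L / 2 * ‖P t - F t‖ ^ 2 ≤ L / 2 * (2 * n) := by gcongr; exact hdiam _ (hP t) _ (hmem t)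
      _ = n * L := by ring
  simpa only [mul_assoc] using le_four_mul_div_of_le_one_sub_two_div (by positivity) hgap

/-- Frank–Wolfe convergence at rate `O(1/t)` with the simple step size `μ_t = 2/(t+2)`. -/
theorem frank_wolfe_rate_simple_step {E : Type*} [NormedAddCommGroup E]
    [InnerProductSpace ℝ E] [CompleteSpace E]
    (n : ℝ) (hn : 0 < n) (Ω : Set E) (hne : Ω.Nonempty) (hΩ : Convex ℝ Ω)
    (hdiam : ∀ x ∈ Ω, ∀ y ∈ Ω, ‖x - y‖ ^ 2 ≤ 2 * n)
    (f : E → ℝ) (f' : E → E)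
    (hconv : ConvexOn ℝ Set.univ f) (hf : ∀ x, HasGradientAt f (f' x) x)
    (L : ℝ) (hL : 0 < L) (hLip : ∀ x y, ‖f' x - f' y‖ ≤ L * ‖x - y‖)
    (Fstar : E) (hFstar : Fstar ∈ Ω) (hopt : ∀ P ∈ Ω, f Fstar ≤ f P)
    (F P : ℕ → E) (hF0 : F 0 ∈ Ω)
    (hinit : f (F 0) - f Fstar ≤ (14 / 3) * n * L)
    (hP : ∀ t, P t ∈ Ω)
    (hPmin : ∀ t, ∀ Q ∈ Ω, ⟪f' (F t), P t⟫ ≤ ⟪f' (F t), Q⟫)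
    (hupd : ∀ t : ℕ, F (t + 1) =
      (1 - 2 / ((t : ℝ) + 2)) • F t + (2 / ((t : ℝ) + 2)) • P t) :
    ∀ t : ℕ, 1 ≤ t → f (F t) - f Fstar ≤ 4 * n * L / ((t : ℝ) + 1) :=
  frank_wolfe_rate_simple_step_general n hn Ω hΩ hdiam f f' hconv hf L hL hLip Fstar hFstar F P hF0
    hP hPmin hupd
end

section
/- (Sequence lemma for the O(1/√t) rate.) Let C > 0 be a real number, T a natural number, h : ℕ → ℝ, g : ℕ → ℝ with g(t) ≥ 0 for all t, and h* ∈ ℝ with h* ≤ h(t) for all t ≤ T+1. Suppose for every t ≤ T, h(t+1) ≤ h(t) − B(t), where B(t) = g(t)²/(4C) if g(t) ≤ 2C and B(t) = g(t) − C otherwise. Then min_{0 ≤ k ≤ T} g(k) ≤ max{2(h(0) − h*), 2C} / √(T+1). -/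
/-!
Let `m` be the smallest gap among the first `T + 1` steps. The guaranteed decrease is monotone in
the gap on `[0, ∞)`, so every step lowers `h` by at least its value at `m`, and telescoping gives
`(T + 1) · B(m) ≤ h(0) − h*`. If `m ≤ 2C` this reads `(T + 1) m² ≤ 4C (h(0) − h*)`, a product of two
numbers bounded by `M = max{2(h(0) − h*), 2C}`; otherwise `B(m) = m − C ≥ m / 2` gives
`(T + 1) m ≤ M`, and `√(T + 1) ≤ T + 1`.
-/

/-- The decrease `B(x)` of the objective guaranteed by a step with dual gap `x`. -/
noncomputable def gapDecrease (C x : ℝ) : ℝ :=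
  if x ≤ 2 * C then x ^ 2 / (4 * C) else x - C

theorem gapDecrease_monotoneOn {C : ℝ} (hC : 0 < C) : MonotoneOn (gapDecrease C) (Set.Ici 0) := by
  intro x hx y _ hxy
  have hx : 0 ≤ x := hx
  unfold gapDecrease
  split_ifs with hx2 hy2 hy2
  · gcongr
  · have : x ^ 2 / (4 * C) ≤ C := by
      rw [div_le_iff₀ (by positivity)]
      nlinarith
    linarith
  · linarith
  · linarith

theorem mul_le_sub_of_forall_le_sub (h : ℕ → ℝ) (b : ℝ) (T : ℕ)
    (hstep : ∀ t ≤ T, h (t + 1) ≤ h t - b) : ((T : ℝ) + 1) * b ≤ h 0 - h (T + 1) := by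
  induction T with
  | zero =>
    have := hstep 0 le_rfl
    norm_num
    linarith
  | succ n ih =>
    have hprev := ih fun t ht => hstep t (by omega)
    have hlast := hstep (n + 1) le_rfl
    push_cast
    linarith

theorem le_max_div_sqrt_of_mul_gapDecrease_le {C m n D : ℝ} (hC : 0 < C) (hn : 1 ≤ n)
    (hD : n * gapDecrease C m ≤ D) : m ≤ max (2 * D) (2 * C) / √n := by
  set M := max (2 * D) (2 * C)
  have hDM : 2 * D ≤ M := le_max_left _ _
  have hCM : 2 * C ≤ M := le_max_right _ _
  have hsqrt : 0 < √n := Real.sqrt_pos.2 (by linarith)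
  rw [le_div_iff₀ hsqrt]
  unfold gapDecrease at hD
  split_ifs at hD with hm
  · have hsq : n * m ^ 2 ≤ 4 * C * D := by
      rwa [← mul_div_assoc, div_le_iff₀ (by positivity), mul_comm D] at hD
    have hsq' : (m * √n) ^ 2 ≤ M ^ 2 := by
      rw [mul_pow, Real.sq_sqrt (by linarith)]
      nlinarith
    exact (abs_le_of_sq_le_sq' hsq' (by linarith)).2
  · have hsqrt_le : √n ≤ n := (Real.sqrt_le_left (by linarith)).2 (by nlinarith)
    calc m * √n ≤ m * n := by gcongr; linarith
      _ ≤ M := by nlinarith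

theorem sqrt_rate_sequence_lemma_general (C : ℝ) (hC : 0 < C) (T : ℕ)
    (h : ℕ → ℝ) (g : ℕ → ℝ)
    (hstar : ℝ) (hlb : ∀ t ≤ T + 1, hstar ≤ h t)
    (hdec : ∀ t ≤ T,
      h (t + 1) ≤ h t - (if g t ≤ 2 * C then (g t) ^ 2 / (4 * C) else g t - C)) :
    (Finset.range (T + 1)).inf' Finset.nonempty_range_add_one g ≤
      max (2 * (h 0 - hstar)) (2 * C) / Real.sqrt ((T : ℝ) + 1) := by
  set m := (Finset.range (T + 1)).inf' Finset.nonempty_range_add_one g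
  rcases lt_or_ge m 0 with hneg | hm0
  · exact hneg.le.trans (div_nonneg (le_max_of_le_right (by positivity)) (Real.sqrt_nonneg _))
  have hstep : ∀ t ≤ T, h (t + 1) ≤ h t - gapDecrease C m := fun t ht =>
    have hmt : m ≤ g t := Finset.inf'_le g (Finset.mem_range.2 (Nat.lt_succ_of_le ht))
    (hdec t ht).trans (sub_le_sub_left (gapDecrease_monotoneOn hC hm0 (hm0.trans hmt) hmt) _)
  have htotal := mul_le_sub_of_forall_le_sub h _ T hstep
  refine le_max_div_sqrt_of_mul_gapDecrease_le hC (by simp) ?_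
  linarith [hlb (T + 1) le_rfl]

/-- Sequence lemma for the `O(1/√t)` dual-gap rate: if `h` decreases at each step by at
least `g(t)²/(4C)` when `g(t) ≤ 2C` and by at least `g(t) − C` otherwise, and is bounded
below by `h*`, then `min_{0 ≤ k ≤ T} g(k) ≤ max{2(h(0) − h*), 2C}/√(T+1)`. -/
theorem sqrt_rate_sequence_lemma (C : ℝ) (hC : 0 < C) (T : ℕ)
    (h : ℕ → ℝ) (g : ℕ → ℝ) (hg : ∀ t, 0 ≤ g t)
    (hstar : ℝ) (hlb : ∀ t ≤ T + 1, hstar ≤ h t)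
    (hdec : ∀ t ≤ T,
      h (t + 1) ≤ h t - (if g t ≤ 2 * C then (g t) ^ 2 / (4 * C) else g t - C)) :
    (Finset.range (T + 1)).inf' Finset.nonempty_range_add_one g ≤
      max (2 * (h 0 - hstar)) (2 * C) / Real.sqrt ((T : ℝ) + 1) :=
  sqrt_rate_sequence_lemma_general C hC T h g hstar hlb hdec
end

section
/- (DNF convergence for size-constrained min cut.) Let n, c be positive integers, 0 ≤ b_l ≤ b_u reals, Ω the dual-bounded constraint set in ℝ^{n×c}, assumed nonempty, and let S ∈ ℝ^{n×n} be a symmetric matrix with ‖S‖_F > 0. Define f : ℝ^{n×c} → ℝ by f(F) = −tr(FᵀSF), whose gradient with respect to the Frobenius inner product is ∇f(F) = −2SF, and let F* ∈ Ω satisfy f(F*) ≤ f(P) for all P ∈ Ω. Starting from F⁰ ∈ Ω, at each step let P^t ∈ Ω satisfy ⟨−2SF^t, P^t⟩_F ≤ ⟨−2SF^t, P⟩_F for all P ∈ Ω, set g_t = ⟨−2SF^t, F^t − P^t⟩_F, μ_t = min(g_t/(4n‖S‖_F), 1), and F^{t+1} = F^t + μ_t(P^t − F^t). Then for every t ≥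 0, min_{0 ≤ k ≤ t} g_k ≤ max{2(f(F⁰) − f(F*)), 4n‖S‖_F} / √(t+1). -/
open scoped Matrix

/-- The dual-bounded constraint set
`Ω = {X : X·1_c = 1_n, b_l·1_c ≤ Xᵀ·1_n ≤ b_u·1_c, X ≥ 0}`. -/
def dualBoundedSet (n c : ℕ) (bl bu : ℝ) : Set (Matrix (Fin n) (Fin c) ℝ) :=
  {X | (∀ i, ∑ j, X i j = 1) ∧ (∀ j, bl ≤ ∑ i, X i j) ∧ (∀ j, ∑ i, X i j ≤ bu) ∧
    (∀ i j, 0 ≤ X i j)}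

/-- The Frobenius norm of a real matrix. -/
noncomputable def frobNorm {m k : ℕ} (A : Matrix (Fin m) (Fin k) ℝ) : ℝ :=
  Real.sqrt (∑ i, ∑ j, (A i j) ^ 2)

/-- The Frobenius inner product `⟨A, B⟩_F = tr(Aᵀ B)`. -/
def frobInner {m k : ℕ} (A B : Matrix (Fin m) (Fin k) ℝ) : ℝ :=
  Matrix.trace (Aᵀ * B)

/-!
Each iteration is a Frank–Wolfe step for the concave quadratic `f`. Along `D = P^t − F^t` one has
`f(F^t + μD) = f(F^t) − μ g_t − μ² tr(DᵀSD)`, and on `Ω` the curvature obeys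
`|tr(DᵀSD)| ≤ ‖S‖_F ‖D‖_F² ≤ 2n‖S‖_F`, because the rows of elements of `Ω` are probability
vectors. Hence the step `μ_t = min(g_t / (4n‖S‖_F), 1)` decreases `f` by at least `g_t μ_t / 2`.
These decreases telescope to at most `f(F⁰) − f(F*)`, and bounding every term below by the
smallest gap gives the `1/√(t+1)` rate.
-/

open Finset

section Frobenius

attribute [local instance] Matrix.frobeniusNormedAddCommGroup

variable {m k : ℕ}

lemma frobNorm_nonneg (A : Matrix (Fin m) (Fin k) ℝ) : 0 ≤ frobNorm A :=
  Real.sqrt_nonneg _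

lemma frobNorm_sq (A : Matrix (Fin m) (Fin k) ℝ) : frobNorm A ^ 2 = ∑ i, ∑ j, A i j ^ 2 :=
  Real.sq_sqrt (by positivity)

lemma frobNorm_eq_norm (A : Matrix (Fin m) (Fin k) ℝ) :
    frobNorm A = ‖A‖ := by
  simp only [frobNorm, Matrix.frobenius_norm_def, Real.norm_eq_abs, Real.rpow_two, sq_abs,
    Real.sqrt_eq_rpow, one_div]

lemma frobNorm_mul_le {l : ℕ} (A : Matrix (Fin l) (Fin m) ℝ) (B : Matrix (Fin m) (Fin k) ℝ) :
    frobNorm (A * B) ≤ frobNorm A * frobNorm B := by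
  simpa only [frobNorm_eq_norm] using Matrix.frobenius_norm_mul A B

lemma frobInner_eq_sum (A B : Matrix (Fin m) (Fin k) ℝ) :
    frobInner A B = ∑ p : Fin m × Fin k, A p.1 p.2 * B p.1 p.2 := by
  simp only [frobInner, Matrix.trace, Matrix.diag, Matrix.mul_apply, Matrix.transpose_apply,
    Fintype.sum_prod_type]
  exact sum_comm

lemma abs_frobInner_le (A B : Matrix (Fin m) (Fin k) ℝ) :
    |frobInner A B| ≤ frobNorm A * frobNorm B := by
  refine abs_le_of_sq_le_sq' ?_ (mul_nonneg (frobNorm_nonneg A) (frobNorm_nonneg B)) |> abs_le.mpr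
  rw [mul_pow, frobNorm_sq, frobNorm_sq, frobInner_eq_sum]
  simpa only [Fintype.sum_prod_type] using
    sum_mul_sq_le_sq_mul_sq univ (fun p : Fin m × Fin k => A p.1 p.2) (fun p => B p.1 p.2)

lemma abs_trace_transpose_mul_mul_self_le (S : Matrix (Fin m) (Fin m) ℝ)
    (D : Matrix (Fin m) (Fin k) ℝ) :
    |Matrix.trace (Dᵀ * S * D)| ≤ frobNorm S * frobNorm D ^ 2 :=
  calc |Matrix.trace (Dᵀ * S * D)| = |frobInner D (S * D)| := by
        rw [frobInner, Matrix.mul_assoc]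
    _ ≤ frobNorm D * frobNorm (S * D) := abs_frobInner_le D (S * D)
    _ ≤ frobNorm D * (frobNorm S * frobNorm D) := by
        gcongr
        · exact frobNorm_nonneg D
        · exact frobNorm_mul_le S D
    _ = frobNorm S * frobNorm D ^ 2 := by ring

end Frobenius

lemma convex_dualBoundedSet (n c : ℕ) (bl bu : ℝ) : Convex ℝ (dualBoundedSet n c bl bu) := by
  rintro X ⟨hXrow, hXlow, hXup, hXnn⟩ Y ⟨hYrow, hYlow, hYup, hYnn⟩ a b ha hb hab
  have hcol : ∀ j, ∑ i, (a • X + b • Y) i j = a * ∑ i, X i j + b * ∑ i, Y i j := fun j => by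
    simp only [Matrix.add_apply, Matrix.smul_apply, smul_eq_mul, sum_add_distrib, mul_sum]
  refine ⟨fun i => ?_, fun j => ?_, fun j => ?_, fun i j => ?_⟩
  · simp only [Matrix.add_apply, Matrix.smul_apply, smul_eq_mul, sum_add_distrib, ← mul_sum,
      hXrow, hYrow]
    linarith
  · have hbl : bl = a * bl + b * bl := by rw [← add_mul, hab, one_mul]
    rw [hcol]
    nlinarith [mul_le_mul_of_nonneg_left (hXlow j) ha, mul_le_mul_of_nonneg_left (hYlow j) hb]
  · have hbu : bu = a * bu + b * bu := by rw [← add_mul, hab, one_mul]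
    rw [hcol]
    nlinarith [mul_le_mul_of_nonneg_left (hXup j) ha, mul_le_mul_of_nonneg_left (hYup j) hb]
  · simp only [Matrix.add_apply, Matrix.smul_apply, smul_eq_mul]
    nlinarith [hXnn i j, hYnn i j]

lemma sum_sq_sub_le_of_rowStochastic {m k : Type*} [Fintype m] [Fintype k]
    {X Y : Matrix m k ℝ} (hX0 : ∀ i j, 0 ≤ X i j) (hX1 : ∀ i, ∑ j, X i j = 1)
    (hY0 : ∀ i j, 0 ≤ Y i j) (hY1 : ∀ i, ∑ j, Y i j = 1) :
    ∑ i, ∑ j, (Y i j - X i j) ^ 2 ≤ 2 * Fintype.card m := by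
  have hle_one : ∀ {Z : Matrix m k ℝ}, (∀ i j, 0 ≤ Z i j) → (∀ i, ∑ j, Z i j = 1) →
      ∀ i j, Z i j ≤ 1 := fun hZ0 hZ1 i j =>
    (single_le_sum (fun j _ => hZ0 i j) (mem_univ j)).trans (hZ1 i).le
  have hrow : ∀ i, ∑ j, (Y i j - X i j) ^ 2 ≤ 2 := fun i =>
    calc ∑ j, (Y i j - X i j) ^ 2 ≤ ∑ j, (Y i j + X i j) := sum_le_sum fun j _ => by
          -- entries lie in `[0, 1]`, so `(y - x) ^ 2 ≤ |y - x| ≤ y + x`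
          nlinarith [hX0 i j, hY0 i j, hle_one hX0 hX1 i j, hle_one hY0 hY1 i j]
      _ = 2 := by rw [sum_add_distrib, hY1 i, hX1 i]; norm_num
  calc ∑ i, ∑ j, (Y i j - X i j) ^ 2 ≤ ∑ _i : m, (2 : ℝ) := sum_le_sum fun i _ => hrow i
    _ = 2 * Fintype.card m := by rw [sum_const, card_univ, nsmul_eq_mul, mul_comm]

lemma frobNorm_sub_sq_le {n c : ℕ} {bl bu : ℝ} {X Y : Matrix (Fin n) (Fin c) ℝ}
    (hX : X ∈ dualBoundedSet n c bl bu) (hY : Y ∈ dualBoundedSet n c bl bu) :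
    frobNorm (Y - X) ^ 2 ≤ 2 * n := by
  simpa only [frobNorm_sq, Matrix.sub_apply, Fintype.card_fin] using
    sum_sq_sub_le_of_rowStochastic hX.2.2.2 hX.1 hY.2.2.2 hY.1

lemma trace_transpose_add_smul_mul_mul {R m k : Type*} [CommRing R] [Fintype m] [Fintype k]
    {S : Matrix m m R} (hS : Sᵀ = S) (X D : Matrix m k R) (μ : R) :
    Matrix.trace ((X + μ • D)ᵀ * S * (X + μ • D)) = Matrix.trace (Xᵀ * S * X) +
      2 * μ * Matrix.trace (Xᵀ * S * D) + μ ^ 2 * Matrix.trace (Dᵀ * S * D) := by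
  have hswap : Matrix.trace (Dᵀ * S * X) = Matrix.trace (Xᵀ * S * D) := by
    rw [← Matrix.trace_transpose]
    simp only [Matrix.transpose_mul, Matrix.transpose_transpose, hS, Matrix.mul_assoc]
  simp only [Matrix.transpose_add, Matrix.transpose_smul, Matrix.add_mul, Matrix.mul_add,
    Matrix.smul_mul, Matrix.mul_smul, Matrix.trace_add, Matrix.trace_smul, smul_eq_mul, hswap]
  ring

lemma frobInner_neg_two_smul_mul {n c : ℕ} {S : Matrix (Fin n) (Fin n) ℝ} (hS : Sᵀ = S)
    (X Y : Matrix (Fin n) (Fin c) ℝ) :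
    frobInner (-(2 : ℝ) • (S * X)) Y = -2 * Matrix.trace (Xᵀ * S * Y) := by
  simp only [frobInner, Matrix.transpose_smul, Matrix.transpose_mul, hS, Matrix.smul_mul,
    Matrix.trace_smul, Matrix.mul_assoc, smul_eq_mul]

/-- With step size `min (g / C) 1`, a quadratic whose curvature is bounded below by `-C / 2`
decreases by at least half the step times the slope `g`. -/
lemma descent_of_curvature_ge {g C q : ℝ} (hg : 0 ≤ g) (hC : 0 ≤ C) (hq : -(C / 2) ≤ q) :
    g * min (g / C) 1 / 2 ≤ min (g / C) 1 * g + min (g / C) 1 ^ 2 * q := by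
  have hμ0 : 0 ≤ min (g / C) 1 := le_min (div_nonneg hg hC) zero_le_one
  have hcurv : -(min (g / C) 1 ^ 2 * (C / 2)) ≤ min (g / C) 1 ^ 2 * q := by
    nlinarith [mul_le_mul_of_nonneg_left hq (sq_nonneg (min (g / C) 1))]
  suffices g * min (g / C) 1 / 2 ≤ min (g / C) 1 * g - min (g / C) 1 ^ 2 * (C / 2) by linarith
  rcases hC.eq_or_lt with rfl | hCpos
  · simp
  rcases le_or_gt g C with hgC | hCg
  · rw [min_eq_left ((div_le_one hCpos).mpr hgC)]
    have hval : g / C * g - (g / C) ^ 2 * (C / 2) = g * (g / C) / 2 := by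
      field_simp
      ring
    linarith
  · rw [min_eq_right ((one_le_div hCpos).mpr hCg.le)]
    linarith

lemma neg_trace_frankWolfe_step_le {n c : ℕ} {bl bu : ℝ} {S : Matrix (Fin n) (Fin n) ℝ}
    (hS : Sᵀ = S) {X P : Matrix (Fin n) (Fin c) ℝ} (hX : X ∈ dualBoundedSet n c bl bu)
    (hP : P ∈ dualBoundedSet n c bl bu) {g : ℝ} (hg0 : 0 ≤ g)
    (hg : g = frobInner (-(2 : ℝ) • (S * X)) (X - P)) :
    -Matrix.trace ((X + min (g / (4 * n * frobNorm S)) 1 • (P - X))ᵀ * S *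
        (X + min (g / (4 * n * frobNorm S)) 1 • (P - X))) +
      g * min (g / (4 * n * frobNorm S)) 1 / 2 ≤ -Matrix.trace (Xᵀ * S * X) := by
  have hslope : g = 2 * Matrix.trace (Xᵀ * S * (P - X)) := by
    rw [hg, frobInner_neg_two_smul_mul hS, ← neg_sub P X, Matrix.mul_neg, Matrix.trace_neg]
    ring
  have hcurv : -(4 * n * frobNorm S / 2) ≤ Matrix.trace ((P - X)ᵀ * S * (P - X)) := by
    have hdiam := frobNorm_sub_sq_le hX hP
    have habs := abs_trace_transpose_mul_mul_self_le S (P - X)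
    nlinarith [neg_abs_le (Matrix.trace ((P - X)ᵀ * S * (P - X))),
      mul_le_mul_of_nonneg_left hdiam (frobNorm_nonneg S)]
  have hdescent :=
    descent_of_curvature_ge hg0 (mul_nonneg (by positivity) (frobNorm_nonneg S)) hcurv
  rw [trace_transpose_add_smul_mul_mul hS]
  rw [hslope] at hdescent ⊢
  linarith

lemma monotoneOn_mul_min_div {C : ℝ} (hC : 0 ≤ C) :
    MonotoneOn (fun x : ℝ => x * min (x / C) 1) (Set.Ici 0) := fun _ hx _ _ hxy =>
  mul_le_mul hxy (min_le_min_right 1 (div_le_div_of_nonneg_right hxy hC))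
    (le_min (div_nonneg hx hC) zero_le_one) (hx.trans hxy)

lemma le_max_div_sqrt_of_mul_mul_min_le {m C h N : ℝ} (hm : 0 ≤ m) (hC : 0 < C) (hN : 1 ≤ N)
    (hmN : N * (m * min (m / C) 1) ≤ h) : m ≤ max h C / √N := by
  have hhM : h ≤ max h C := le_max_left h C
  have hCM : C ≤ max h C := le_max_right h C
  have hsq : m ^ 2 * N ≤ max h C ^ 2 := by
    rcases le_or_gt C m with hCm | hmC
    · rw [min_eq_right ((one_le_div hC).mpr hCm), mul_one] at hmN
      have hNm : N * m ≤ max h C := hmN.trans hhM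
      have hmM : m ≤ max h C := le_trans (by nlinarith) hNm
      calc m ^ 2 * N = m * (N * m) := by ring
        _ ≤ max h C * max h C := mul_le_mul hmM hNm (by positivity) (hm.trans hmM)
        _ = max h C ^ 2 := (sq _).symm
    · rw [min_eq_left ((div_le_one hC).mpr hmC.le)] at hmN
      have : N * m ^ 2 ≤ h * C := by
        rw [mul_div_assoc', mul_div_assoc', div_le_iff₀ hC] at hmN
        nlinarith
      nlinarith [mul_le_mul hhM hCM hC.le (hC.le.trans hCM)]
  have hsqrtN : 0 < √N := Real.sqrt_pos.mpr (by linarith)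
  rw [le_div_iff₀ hsqrtN]
  refine (pow_le_pow_iff_left₀ (by positivity) (hC.le.trans hCM) two_ne_zero).mp ?_
  rwa [mul_pow, Real.sq_sqrt (by linarith)]

theorem inf'_range_le_of_sufficient_decrease {a g : ℕ → ℝ} {C L : ℝ} (hC : 0 < C)
    (hg : ∀ t, 0 ≤ g t) (hdec : ∀ t, a (t + 1) + g t * min (g t / C) 1 / 2 ≤ a t)
    (hL : ∀ t, L ≤ a t) (t : ℕ) :
    (range (t + 1)).inf' nonempty_range_add_one g ≤ max (2 * (a 0 - L)) C / √((t : ℝ) + 1) := by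
  set m := (range (t + 1)).inf' nonempty_range_add_one g
  have hm0 : 0 ≤ m := le_inf' _ _ fun k _ => hg k
  have hsum : ∑ k ∈ range (t + 1), g k * min (g k / C) 1 / 2 ≤ a 0 - L :=
    calc ∑ k ∈ range (t + 1), g k * min (g k / C) 1 / 2
        ≤ ∑ k ∈ range (t + 1), (a k - a (k + 1)) := sum_le_sum fun k _ => by linarith [hdec k]
      _ = a 0 - a (t + 1) := sum_range_sub' a (t + 1)
      _ ≤ a 0 - L := by linarith [hL (t + 1)]
  have hterm : ∀ k ∈ range (t + 1), m * min (m / C) 1 / 2 ≤ g k * min (g k / C) 1 / 2 :=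
    fun k hk => by
      have := monotoneOn_mul_min_div hC.le hm0 (hg k) (inf'_le g hk)
      dsimp only at this
      linarith
  refine le_max_div_sqrt_of_mul_mul_min_le hm0 hC (by linarith [t.cast_nonneg (α := ℝ)]) ?_
  have := card_nsmul_le_sum _ _ _ hterm
  rw [card_range, nsmul_eq_mul] at this
  push_cast at this
  linarith

theorem dnf_min_cut_convergence_general {n c : ℕ} (hn : 0 < n)
    (bl bu : ℝ)
    (S : Matrix (Fin n) (Fin n) ℝ) (hS : Sᵀ = S) (hSpos : 0 < frobNorm S)
    (f : Matrix (Fin n) (Fin c) ℝ → ℝ)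
    (hf : ∀ F, f F = -(Matrix.trace (Fᵀ * S * F)))
    (Fstar : Matrix (Fin n) (Fin c) ℝ)
    (hopt : ∀ P ∈ dualBoundedSet n c bl bu, f Fstar ≤ f P)
    (F P : ℕ → Matrix (Fin n) (Fin c) ℝ) (g μ : ℕ → ℝ)
    (hF0 : F 0 ∈ dualBoundedSet n c bl bu)
    (hP : ∀ t, P t ∈ dualBoundedSet n c bl bu)
    (hPmin : ∀ t, ∀ Q ∈ dualBoundedSet n c bl bu,
      frobInner (-(2 : ℝ) • (S * F t)) (P t) ≤ frobInner (-(2 : ℝ) • (S * F t)) Q)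
    (hg : ∀ t, g t = frobInner (-(2 : ℝ) • (S * F t)) (F t - P t))
    (hμ : ∀ t, μ t = min (g t / (4 * n * frobNorm S)) 1)
    (hupd : ∀ t : ℕ, F (t + 1) = F t + μ t • (P t - F t)) :
    ∀ t : ℕ, (Finset.range (t + 1)).inf' Finset.nonempty_range_add_one g ≤
      max (2 * (f (F 0) - f Fstar)) (4 * n * frobNorm S) / Real.sqrt ((t : ℝ) + 1) := by
  have hC : 0 < 4 * n * frobNorm S := by positivity
  have hgap : ∀ t, F t ∈ dualBoundedSet n c bl bu → 0 ≤ g t := fun t ht => by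
    rw [hg, frobInner, Matrix.mul_sub, Matrix.trace_sub, sub_nonneg]
    exact hPmin t (F t) ht
  have hmem : ∀ t, F t ∈ dualBoundedSet n c bl bu := by
    intro t
    induction t with
    | zero => exact hF0
    | succ t ih =>
      rw [hupd, hμ]
      exact (convex_dualBoundedSet n c bl bu).add_smul_sub_mem ih (hP t)
        ⟨le_min (div_nonneg (hgap t ih) hC.le) zero_le_one, min_le_right _ _⟩
  refine inf'_range_le_of_sufficient_decrease hC (fun t => hgap t (hmem t)) (fun t => ?_)
    (fun t => hopt _ (hmem t))
  rw [hf, hf, hupd, hμ]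
  exact neg_trace_frankWolfe_step_le hS (hmem t) (hP t) (hgap t (hmem t)) (hg t)

/-- DNF convergence for size-constrained min cut: the minimal dual gap over the first
`t+1` iterations is at most `max{2(f(F⁰) − f(F*)), 4n‖S‖_F}/√(t+1)`. -/
theorem dnf_min_cut_convergence {n c : ℕ} (hn : 0 < n) (hc : 0 < c)
    (bl bu : ℝ) (hbl : 0 ≤ bl) (hbu : bl ≤ bu)
    (hne : (dualBoundedSet n c bl bu).Nonempty)
    (S : Matrix (Fin n) (Fin n) ℝ) (hS : Sᵀ = S) (hSpos : 0 < frobNorm S)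
    (f : Matrix (Fin n) (Fin c) ℝ → ℝ)
    (hf : ∀ F, f F = -(Matrix.trace (Fᵀ * S * F)))
    (Fstar : Matrix (Fin n) (Fin c) ℝ) (hFstar : Fstar ∈ dualBoundedSet n c bl bu)
    (hopt : ∀ P ∈ dualBoundedSet n c bl bu, f Fstar ≤ f P)
    (F P : ℕ → Matrix (Fin n) (Fin c) ℝ) (g μ : ℕ → ℝ)
    (hF0 : F 0 ∈ dualBoundedSet n c bl bu)
    (hP : ∀ t, P t ∈ dualBoundedSet n c bl bu)
    (hPmin : ∀ t, ∀ Q ∈ dualBoundedSet n c bl bu,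
      frobInner (-(2 : ℝ) • (S * F t)) (P t) ≤ frobInner (-(2 : ℝ) • (S * F t)) Q)
    (hg : ∀ t, g t = frobInner (-(2 : ℝ) • (S * F t)) (F t - P t))
    (hμ : ∀ t, μ t = min (g t / (4 * n * frobNorm S)) 1)
    (hupd : ∀ t : ℕ, F (t + 1) = F t + μ t • (P t - F t)) :
    ∀ t : ℕ, (Finset.range (t + 1)).inf' Finset.nonempty_range_add_one g ≤
      max (2 * (f (F 0) - f Fstar)) (4 * n * frobNorm S) / Real.sqrt ((t : ℝ) + 1) :=
  dnf_min_cut_convergence_general hn bl bu S hS hSpos f hf Fstar hopt F P g μ hF0 hP hPmin hg hμ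
    hupd
end
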